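/- Let L/K be a totally ramified cyclic Galois extension of degree p with group G = ⟨σ⟩, and let (x_1,…,x_n) ∈ W_n(O_L) be a Witt vector with tr(x) = Σ_{i=0}^{p−1} σ^i·x = 0 in W_n(O_L). Then for each 2 ≤ ℓ ≤ n, −tr(x_ℓ) = (tr(x_{ℓ−1}^p) − tr(x_{ℓ−1})^p)/p − C·tr(x_{ℓ−1})^p + h_{ℓ−2}, where C = (1/p)Σ_{j=1}^{p−1}(−1)^j C(p,j) ∈ ℤ, tr denotes the field trace on coordinates, and h_{ℓ−2} ∈ O_K is an explicit polynomial expression in x_1,…,x_{ℓ−2} and their Galois conjugates, all of whose monomials have degree ≥ p². -/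

import Mathlib

noncomputable section

/-- The value group `ℤ ∪ {0}` (multiplicative notation) of a normalized discrete valuation. -/
abbrev Zm0 : Type := WithZero (Multiplicative ℤ)

/-- The element of `ℤₘ₀` corresponding to valuation value `n` (i.e. `v(x) = n` is encoded as
`w x = oa (-n)` for the multiplicative valuation `w`). -/
def oa (n : ℤ) : Zm0 := (Multiplicative.ofAdd n : Multiplicative ℤ)

variable {K L : Type} [Field K] [Field L] [Algebra K L]
variable (wL : Valuation L Zm0)

/-- A valuation-preserving `K`-automorphism of `L` restricts to a ring endomorphism of the
valuation ring `O_L`. -/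
def galHom (hGal : ∀ (σ : L ≃ₐ[K] L) (a : L), wL (σ a) = wL a) (σ : L ≃ₐ[K] L) :
    wL.valuationSubring →+* wL.valuationSubring where
  toFun a := ⟨σ a, by
    rw [Valuation.mem_valuationSubring_iff, hGal]
    exact a.2⟩
  map_one' := Subtype.ext (map_one σ)
  map_mul' a b := Subtype.ext (map_mul σ (a : L) (b : L))
  map_zero' := Subtype.ext (map_zero σ)
  map_add' a b := Subtype.ext (map_add σ (a : L) (b : L))

variable (p : ℕ) [Fact p.Prime]

/-- The ring homomorphism on truncated Witt vectors induced by a ring homomorphism. -/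
def twmap {R S : Type} [CommRing R] [CommRing S] (f : R →+* S) (n : ℕ) :
    TruncatedWittVector p n R →+* TruncatedWittVector p n S :=
  RingHom.liftOfRightInverse (WittVector.truncate n) TruncatedWittVector.out
    (fun x => TruncatedWittVector.truncateFun_out x)
    ⟨(WittVector.truncate n).comp (WittVector.map f), by
      intro x hx
      have hx' : ∀ i < n, x.coeff i = 0 := (WittVector.mem_ker_truncate _ _).mp hx
      rw [RingHom.mem_ker, RingHom.comp_apply, ← RingHom.mem_ker]
      refine (WittVector.mem_ker_truncate _ _).mpr ?_
      intro i hi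
      rw [WittVector.map_coeff, hx' i hi, map_zero]⟩

theorem twmap_coeff {R S : Type} [CommRing R] [CommRing S] (f : R →+* S) (n : ℕ)
    (x : TruncatedWittVector p n R) (i : Fin n) :
    (twmap p f n x).coeff i = f (x.coeff i) := by
  have h1 : x = WittVector.truncate n x.out := (TruncatedWittVector.truncateFun_out x).symm
  rw [h1]
  rw [twmap]
  erw [RingHom.liftOfRightInverse_comp_apply]
  rw [RingHom.comp_apply, WittVector.coeff_truncate, WittVector.map_coeff,
    WittVector.coeff_truncate, TruncatedWittVector.coeff_out]

/-- Coordinatewise Galois action on truncated Witt vectors over `O_L`. -/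
def wittAction (hGal : ∀ (σ : L ≃ₐ[K] L) (a : L), wL (σ a) = wL a) (n : ℕ) :
    DistribMulAction (L ≃ₐ[K] L) (TruncatedWittVector p n wL.valuationSubring) where
  smul σ x := twmap p (galHom wL hGal σ) n x
  one_smul x := by
    show twmap p (galHom wL hGal 1) n x = x
    apply TruncatedWittVector.ext
    intro i
    rw [twmap_coeff]
    exact Subtype.ext rfl
  mul_smul σ τ x := by
    show twmap p (galHom wL hGal (σ * τ)) n x
      = twmap p (galHom wL hGal σ) n (twmap p (galHom wL hGal τ) n x)
    apply TruncatedWittVector.ext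
    intro i
    rw [twmap_coeff, twmap_coeff, twmap_coeff]
    rfl
  smul_zero σ := map_zero _
  smul_add σ x y := map_add _ x y

end

/-! Let `y₀, …, y_{k-1}` be generic Witt vectors over `ℤ[X_{a,i}]`,
`z = -(y₀ + ⋯ + y_{k-1})` and `P_m(e) = ∑ₐ y_{a,m}^e + z_m^e`. Modulo `p`, Frobenius gives
`P_ℓ(1)^p ≡ P_ℓ(p)`, so `-(p P_{ℓ+1}(1) + P_ℓ(p) + (-1)^p P_ℓ(1)^p) = p H` with `H`
integral. The ghost components of `y₀ + ⋯ + z = 0` say `∑_{i ≤ m} p^i P_i(p^{m-i}) = 0`;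
at `m = ℓ + 1` and `m = ℓ` they give `p^{ℓ+ℓp+1} H = p^{ℓp} S - p^ℓ T^p` with `S, T` built
from the `P_i`, `i < ℓ`, of degrees `≥ p²` and `≥ p`. Hence `H` only involves levels `< ℓ`
and all its monomials have degree `≥ p²`. Specialising `y_a` to the conjugates `σ^a x`
(`k = p - 1`), trace zero forces `z ≡ σ^{p-1} x` in the first `n` coordinates, and `P_m(e)`
becomes `tr(x_m^e)`. -/

open MvPolynomial Finset

section Cancellation

variable {σ A : Type*} [CommRing A] [IsDomain A] {a : A} {f : MvPolynomial σ A}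

theorem mem_supported_of_C_mul_mem (ha : a ≠ 0) {s : Set σ} (h : C a * f ∈ supported A s) :
    f ∈ supported A s := by
  rw [mem_supported, vars_C_mul a ha] at h
  exact mem_supported.mpr h

theorem mem_pow_idealOfVars_of_C_mul_mem (ha : a ≠ 0) {d : ℕ}
    (h : C a * f ∈ idealOfVars σ A ^ d) : f ∈ idealOfVars σ A ^ d := by
  rwa [mem_pow_idealOfVars_iff, ← smul_eq_C_mul, support_smul_eq ha,
    ← mem_pow_idealOfVars_iff] at h

end Cancellation

theorem Valuation.aeval_le_pow {L Γ σ : Type*} [Field L] [LinearOrderedCommGroupWithZero Γ]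
    (v : Valuation L Γ) {s : Set σ} {d : ℕ} {H : MvPolynomial σ ℤ}
    (hs : H ∈ supported ℤ s) (hd : H ∈ idealOfVars σ ℤ ^ d) {g : σ → v.valuationSubring}
    {M : Γ} (hM : M ≤ 1) (hg : ∀ i ∈ s, v (g i) ≤ M) : v (aeval g H) ≤ M ^ d := by
  rw [mem_supported, Set.subset_def] at hs
  rw [mem_pow_idealOfVars_iff] at hd
  rw [aeval_def, eval₂_eq]
  push_cast
  refine v.map_sum_le fun m hm => ?_
  have hcoeff : v (algebraMap ℤ v.valuationSubring (H.coeff m)) ≤ 1 :=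
    (algebraMap ℤ v.valuationSubring (H.coeff m)).2
  have hvars (i : σ) (hi : i ∈ m.support) : v ((g i : L) ^ m i) ≤ M ^ m i := by
    rw [v.map_pow]
    exact pow_le_pow_left' (hg i (hs i ((mem_vars_iff_mem_support i).mpr ⟨m, hm, hi⟩))) _
  calc v (algebraMap ℤ v.valuationSubring (H.coeff m) * ∏ i ∈ m.support, (g i : L) ^ m i)
      ≤ 1 * ∏ i ∈ m.support, M ^ m i := by
        rw [v.map_mul, map_prod]
        exact mul_le_mul' hcoeff (prod_le_prod' hvars)
    _ = M ^ Finsupp.degree m := by rw [one_mul, prod_pow_eq_pow_sum, Finsupp.degree_apply]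
    _ ≤ M ^ d := pow_le_pow_right_of_le_one' hM (hd m hm)

section WittPowerSums

variable {p : ℕ} {A : Type*} [CommRing A] {k : ℕ}

def coeffPowerSum (y : Fin k → WittVector p A) (z : WittVector p A) (m e : ℕ) : A :=
  ∑ a, (y a).coeff m ^ e + z.coeff m ^ e

def ghostPartialSum (y : Fin k → WittVector p A) (z : WittVector p A) (ℓ m : ℕ) : A :=
  ∑ i ∈ range ℓ, (p : A) ^ i * coeffPowerSum y z i (p ^ (m - i))

theorem ghostPartialSum_succ (y : Fin k → WittVector p A) (z : WittVector p A) (ℓ m : ℕ) :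
    ghostPartialSum y z (ℓ + 1) m =
      ghostPartialSum y z ℓ m + (p : A) ^ ℓ * coeffPowerSum y z ℓ (p ^ (m - ℓ)) :=
  sum_range_succ _ _

theorem ghostPartialSum_succ_self_eq_zero [Fact p.Prime] {y : Fin k → WittVector p A}
    {z : WittVector p A} (h : ∑ a, y a + z = 0) (m : ℕ) :
    ghostPartialSum y z (m + 1) m = 0 := by
  have := congrArg (WittVector.ghostComponent m) h
  simp only [map_add, map_sum, map_zero, WittVector.ghostComponent_apply,
    aeval_wittPolynomial] at this
  rw [← this, sum_comm]
  simp only [ghostPartialSum, coeffPowerSum, mul_add, mul_sum, sum_add_distrib]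

end WittPowerSums

noncomputable section Universal

variable (p k : ℕ)

def univY (a : Fin k) : WittVector p (MvPolynomial (Fin k × ℕ) ℤ) :=
  WittVector.mk p fun i => X (a, i)

@[simp]
theorem coeff_univY (a : Fin k) (i : ℕ) : (univY p k a).coeff i = X (a, i) :=
  rfl

variable [Fact p.Prime]

def univZ : WittVector p (MvPolynomial (Fin k × ℕ) ℤ) :=
  -∑ a, univY p k a

variable {p k}

theorem sum_univY_add_univZ : ∑ a, univY p k a + univZ p k = 0 :=
  add_neg_cancel _

theorem univZ_coeff_mem_idealOfVars (i : ℕ) :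
    (univZ p k).coeff i ∈ idealOfVars (Fin k × ℕ) ℤ := by
  have hY (a : Fin k) : WittVector.map constantCoeff (univY p k a) = 0 := by
    ext j
    simp
  have hZ : constantCoeff ((univZ p k).coeff i) = 0 := by
    rw [← WittVector.map_coeff, univZ, map_neg, map_sum]
    simp [hY]
  rw [← pow_one (idealOfVars _ _), mem_pow_idealOfVars_iff']
  intro m hm
  rw [Nat.lt_one_iff, Finsupp.degree_eq_zero_iff] at hm
  rwa [hm, ← constantCoeff_eq]

theorem coeffPowerSum_univ_mem_pow_idealOfVars (m e : ℕ) :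
    coeffPowerSum (univY p k) (univZ p k) m e ∈ idealOfVars (Fin k × ℕ) ℤ ^ e := by
  refine add_mem (sum_mem fun a _ => ?_) (Ideal.pow_mem_pow (univZ_coeff_mem_idealOfVars m) e)
  exact Ideal.pow_mem_pow (by simpa using Ideal.subset_span (Set.mem_range_self (a, m))) e

theorem univZ_coeff_mem_supported (i : ℕ) :
    (univZ p k).coeff i ∈ supported ℤ {v : Fin k × ℕ | v.2 ≤ i} := by
  induction i using Nat.strong_induction_on with
  | _ i ih =>
  have hX (j : ℕ) (hj : j ≤ i) (a : Fin k) :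
      X (a, j) ∈ supported ℤ {v : Fin k × ℕ | v.2 ≤ i} :=
    X_mem_supported.mpr hj
  have hlow : ghostPartialSum (univY p k) (univZ p k) i i ∈
      supported ℤ {v : Fin k × ℕ | v.2 ≤ i} := by
    refine sum_mem fun j hj => mul_mem (pow_mem (natCast_mem _ _) j) ?_
    have hj : j < i := mem_range.mp hj
    exact add_mem (sum_mem fun a _ => pow_mem (hX j hj.le a) _)
      (pow_mem (supported_mono (fun v hv => le_trans hv hj.le) (ih j hj)) _)
  have hrel := ghostPartialSum_succ_self_eq_zero (sum_univY_add_univZ (p := p) (k := k)) i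
  rw [ghostPartialSum_succ, Nat.sub_self, pow_zero] at hrel
  have hC : C ((p : ℤ) ^ i) * coeffPowerSum (univY p k) (univZ p k) i 1 ∈
      supported ℤ {v : Fin k × ℕ | v.2 ≤ i} := by
    rw [map_pow, map_natCast, eq_neg_of_add_eq_zero_right hrel]
    exact neg_mem hlow
  have hsum := mem_supported_of_C_mul_mem
    (pow_ne_zero _ (Nat.cast_ne_zero.mpr (Fact.out : p.Prime).ne_zero)) hC
  simp only [coeffPowerSum, coeff_univY, pow_one] at hsum
  have := sub_mem hsum (sum_mem (t := univ) fun a _ => hX i le_rfl a)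
  rwa [add_sub_cancel_left] at this

theorem coeffPowerSum_univ_mem_supported (m e : ℕ) :
    coeffPowerSum (univY p k) (univZ p k) m e ∈ supported ℤ {v : Fin k × ℕ | v.2 ≤ m} := by
  simp only [coeffPowerSum, coeff_univY]
  refine add_mem (sum_mem fun a _ => pow_mem ?_ e) (pow_mem (univZ_coeff_mem_supported m) e)
  exact X_mem_supported.mpr (le_refl m)

theorem ghostPartialSum_univ_mem_supported (ℓ m : ℕ) :
    ghostPartialSum (univY p k) (univZ p k) ℓ m ∈ supported ℤ {v : Fin k × ℕ | v.2 < ℓ} :=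
  sum_mem fun i hi => mul_mem (pow_mem (natCast_mem _ _) i) <|
    supported_mono (fun _ hv => lt_of_le_of_lt hv (mem_range.mp hi))
      (coeffPowerSum_univ_mem_supported i _)

theorem ghostPartialSum_univ_mem_pow_idealOfVars (ℓ m : ℕ) :
    ghostPartialSum (univY p k) (univZ p k) ℓ m ∈
      idealOfVars (Fin k × ℕ) ℤ ^ p ^ (m + 1 - ℓ) :=
  sum_mem fun i hi => Ideal.mul_mem_left _ _ <|
    Ideal.pow_le_pow_right (Nat.pow_le_pow_right (Fact.out : p.Prime).pos
      (by have := mem_range.mp hi; omega)) (coeffPowerSum_univ_mem_pow_idealOfVars i _)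

theorem C_dvd_coeffPowerSum_univ (m : ℕ) :
    C (p : ℤ) ∣ coeffPowerSum (univY p k) (univZ p k) m p +
      (-1) ^ p * coeffPowerSum (univY p k) (univZ p k) m 1 ^ p := by
  rw [C_dvd_iff_zmod]
  simp only [coeffPowerSum, pow_one, map_add, map_mul, map_pow, map_sum, map_neg, map_one]
  rw [add_pow_char, sum_pow_char, neg_one_pow_char]
  ring

theorem exists_univ_trace_identity (ℓ : ℕ) :
    ∃ H : MvPolynomial (Fin k × ℕ) ℤ, H ∈ supported ℤ {v : Fin k × ℕ | v.2 < ℓ} ∧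
      H ∈ idealOfVars (Fin k × ℕ) ℤ ^ p ^ 2 ∧
      (p : MvPolynomial (Fin k × ℕ) ℤ) * H =
        -(p * coeffPowerSum (univY p k) (univZ p k) (ℓ + 1) 1 +
          coeffPowerSum (univY p k) (univZ p k) ℓ p +
          (-1) ^ p * coeffPowerSum (univY p k) (univZ p k) ℓ 1 ^ p) := by
  set P := coeffPowerSum (univY p k) (univZ p k)
  set G := ghostPartialSum (univY p k) (univZ p k)
  obtain ⟨H₀, hH₀⟩ := C_dvd_coeffPowerSum_univ (p := p) (k := k) ℓ
  rw [map_natCast] at hH₀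
  set H := -P (ℓ + 1) 1 - H₀
  have hid : (p : MvPolynomial (Fin k × ℕ) ℤ) * H =
      -(p * P (ℓ + 1) 1 + P ℓ p + (-1) ^ p * P ℓ 1 ^ p) := by
    linear_combination hH₀
  have hS : G ℓ (ℓ + 1) + (p : MvPolynomial (Fin k × ℕ) ℤ) ^ ℓ * P ℓ p +
      (p : MvPolynomial (Fin k × ℕ) ℤ) ^ (ℓ + 1) * P (ℓ + 1) 1 = 0 := by
    have := ghostPartialSum_succ_self_eq_zero (sum_univY_add_univZ (p := p) (k := k)) (ℓ + 1)
    rwa [ghostPartialSum_succ, ghostPartialSum_succ, Nat.sub_self, pow_zero,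
      Nat.add_sub_cancel_left, pow_one] at this
  have hT : G ℓ ℓ + (p : MvPolynomial (Fin k × ℕ) ℤ) ^ ℓ * P ℓ 1 = 0 := by
    have := ghostPartialSum_succ_self_eq_zero (sum_univY_add_univZ (p := p) (k := k)) ℓ
    rwa [ghostPartialSum_succ, Nat.sub_self, pow_zero] at this
  have hTp :
      G ℓ ℓ ^ p = (-1) ^ p * (p : MvPolynomial (Fin k × ℕ) ℤ) ^ (ℓ * p) * P ℓ 1 ^ p := by
    rw [eq_neg_of_add_eq_zero_left hT, neg_pow, mul_pow, pow_mul, mul_assoc]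
  have hkey : C ((p : ℤ) ^ ℓ * p ^ (ℓ * p) * p) * H =
      (p : MvPolynomial (Fin k × ℕ) ℤ) ^ (ℓ * p) * G ℓ (ℓ + 1) -
        (p : MvPolynomial (Fin k × ℕ) ℤ) ^ ℓ * G ℓ ℓ ^ p := by
    simp only [map_mul, map_pow, map_natCast]
    linear_combination (p ^ ℓ * p ^ (ℓ * p) : MvPolynomial (Fin k × ℕ) ℤ) * hid -
      (p ^ (ℓ * p) : MvPolynomial (Fin k × ℕ) ℤ) * hS +
      (p ^ ℓ : MvPolynomial (Fin k × ℕ) ℤ) * hTp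
  have hne : (p : ℤ) ^ ℓ * p ^ (ℓ * p) * p ≠ 0 := by
    have := (Fact.out : p.Prime).pos
    positivity
  refine ⟨H, mem_supported_of_C_mul_mem hne ?_, mem_pow_idealOfVars_of_C_mul_mem hne ?_, hid⟩
    <;> rw [hkey]
  · exact sub_mem
      (mul_mem (pow_mem (natCast_mem _ _) _) (ghostPartialSum_univ_mem_supported _ _))
      (mul_mem (pow_mem (natCast_mem _ _) _) (pow_mem (ghostPartialSum_univ_mem_supported _ _) _))
  · have hSI := ghostPartialSum_univ_mem_pow_idealOfVars (p := p) (k := k) ℓ (ℓ + 1)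
    have hTI :=
      Ideal.pow_mem_pow (ghostPartialSum_univ_mem_pow_idealOfVars (p := p) (k := k) ℓ ℓ) p
    rw [show ℓ + 1 + 1 - ℓ = 2 by omega] at hSI
    rw [Nat.add_sub_cancel_left, pow_one, ← pow_mul, ← sq] at hTI
    exact sub_mem (Ideal.mul_mem_left _ _ hSI) (Ideal.mul_mem_left _ _ hTI)

end Universal

section Specialization

variable {p : ℕ} [Fact p.Prime] {A : Type*} [CommRing A] {k n : ℕ}

theorem exists_trace_identity (y : Fin k → WittVector p A) (z : WittVector p A)
    (hyz : WittVector.truncate n (∑ a, y a + z) = 0) {ℓ : ℕ} (hℓ : ℓ + 1 < n) :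
    ∃ H : MvPolynomial (Fin k × ℕ) ℤ, H ∈ supported ℤ {v : Fin k × ℕ | v.2 < ℓ} ∧
      H ∈ idealOfVars (Fin k × ℕ) ℤ ^ p ^ 2 ∧
      (p : A) * aeval (fun v => (y v.1).coeff v.2) H =
        -(p * coeffPowerSum y z (ℓ + 1) 1 + coeffPowerSum y z ℓ p +
          (-1) ^ p * coeffPowerSum y z ℓ 1 ^ p) := by
  obtain ⟨H, hHs, hHd, hid⟩ := exists_univ_trace_identity (p := p) (k := k) ℓ
  set f := aeval (R := ℤ) fun v : Fin k × ℕ => (y v.1).coeff v.2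
  have hY (a : Fin k) :
      WittVector.map (f : MvPolynomial (Fin k × ℕ) ℤ →+* A) (univY p k a) = y a := by
    ext i
    simp [f]
  have hZ (m : ℕ) (hm : m < n) : f ((univZ p k).coeff m) = z.coeff m := by
    have hz : WittVector.truncate n z = WittVector.truncate n (-∑ a, y a) := by
      rw [map_add] at hyz
      rw [map_neg]
      linear_combination hyz
    have := congrArg (TruncatedWittVector.coeff ⟨m, hm⟩) hz
    simp only [WittVector.coeff_truncate] at this
    change (f : MvPolynomial (Fin k × ℕ) ℤ →+* A) _ = _
    rw [this, ← WittVector.map_coeff, univZ, map_neg, map_sum]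
    simp only [hY]
  have hP (m e : ℕ) (hm : m < n) :
      f (coeffPowerSum (univY p k) (univZ p k) m e) = coeffPowerSum y z m e := by
    simp [coeffPowerSum, hZ m hm, f]
  refine ⟨H, hHs, hHd, ?_⟩
  have := congrArg f hid
  simp only [map_mul, map_natCast, map_neg, map_add, map_pow, map_one] at this
  rwa [hP _ _ hℓ, hP _ _ (by omega), hP _ _ (by omega)] at this

end Specialization

theorem twmap_truncate {p : ℕ} [Fact p.Prime] {R S : Type} [CommRing R] [CommRing S]
    (f : R →+* S) (n : ℕ) (w : WittVector p R) :
    twmap p f n (WittVector.truncate n w) = WittVector.truncate n (WittVector.map f w) :=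
  RingHom.liftOfRightInverse_comp_apply _ _ _ _ _

theorem IsCyclic.sum_range_card_pow {G M : Type*} [Group G] [Fintype G] [AddCommMonoid M]
    {σ : G} (hσ : ∀ g, g ∈ Subgroup.zpowers σ) (F : G → M) :
    ∑ i ∈ range (Nat.card G), F (σ ^ i) = ∑ g, F g := by
  classical
  rw [← IsCyclic.image_range_card hσ, sum_image]
  intro i hi j hj hij
  rw [coe_range, ← orderOf_eq_card_of_forall_mem_zpowers hσ] at hi hj
  exact pow_injOn_Iio_orderOf hi hj hij

theorem sum_fin_pred_add_eq_sum_range {M : Type*} [AddCommMonoid M] {p : ℕ} (hp : p ≠ 0)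
    (F : ℕ → M) : ∑ a : Fin (p - 1), F a + F (p - 1) = ∑ i ∈ range p, F i := by
  rw [Fin.sum_univ_eq_sum_range F, ← sum_range_succ,
    Nat.sub_add_cancel (Nat.one_le_iff_ne_zero.mpr hp)]

theorem exists_conj_trace_identity {K L : Type} [Field K] [Field L] [Algebra K L]
    [IsGalois K L] [FiniteDimensional K L] [IsCyclic (L ≃ₐ[K] L)] {p : ℕ} [Fact p.Prime]
    (hdeg : Module.finrank K L = p) (wL : Valuation L Zm0)
    (hGal : ∀ (σ : L ≃ₐ[K] L) (a : L), wL (σ a) = wL a) {n : ℕ}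
    {x : TruncatedWittVector p n wL.valuationSubring}
    (hx : ∑ σ : L ≃ₐ[K] L, twmap p (galHom wL hGal σ) n x = 0) {ℓ ℓ' : Fin n}
    (hℓ : (ℓ' : ℕ) + 1 = ℓ) :
    ∃ η : wL.valuationSubring,
      (p : L) * η = algebraMap K L
        (-(p * Algebra.trace K L ((x.coeff ℓ : wL.valuationSubring) : L) +
          Algebra.trace K L (((x.coeff ℓ' : wL.valuationSubring) : L) ^ p) +
          (-1) ^ p * Algebra.trace K L ((x.coeff ℓ' : wL.valuationSubring) : L) ^ p)) ∧
      ∀ M ≤ 1, (∀ j : Fin n, (j : ℕ) < ℓ' → wL ((x.coeff j : wL.valuationSubring) : L) ≤ M) →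
        wL η ≤ M ^ p ^ 2 := by
  have hp : p ≠ 0 := (Fact.out : p.Prime).ne_zero
  obtain ⟨σ, hσ⟩ := IsCyclic.exists_generator (α := L ≃ₐ[K] L)
  have hcard : Nat.card (L ≃ₐ[K] L) = p := by rw [IsGalois.card_aut_eq_finrank, hdeg]
  set c : ℕ → WittVector p wL.valuationSubring :=
    fun i => WittVector.map (galHom wL hGal (σ ^ i)) x.out
  have hyz : WittVector.truncate n (∑ a : Fin (p - 1), c a + c (p - 1)) = 0 := by
    rw [sum_fin_pred_add_eq_sum_range hp c, map_sum, ← hx, ← IsCyclic.sum_range_card_pow hσ,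
      hcard]
    refine sum_congr rfl fun i _ => ?_
    rw [← twmap_truncate]
    congr 1
    exact TruncatedWittVector.truncateFun_out x
  obtain ⟨H, hHs, hHd, hid⟩ :=
    exists_trace_identity (fun a : Fin (p - 1) => c a) (c (p - 1)) hyz (ℓ := ℓ') (by omega)
  have htr (m : Fin n) (e : ℕ) :
      ((coeffPowerSum (fun a : Fin (p - 1) => c a) (c (p - 1)) m e : wL.valuationSubring) : L) =
        algebraMap K L (Algebra.trace K L (((x.coeff m : wL.valuationSubring) : L) ^ e)) := by
    rw [trace_eq_sum_automorphisms, ← IsCyclic.sum_range_card_pow hσ, hcard,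
      ← sum_fin_pred_add_eq_sum_range hp]
    simp [coeffPowerSum, c, galHom, TruncatedWittVector.coeff_out]
  refine ⟨aeval (fun v => (c v.1).coeff v.2) H, ?_,
    fun M hM hxM => wL.aeval_le_pow hHs hHd hM ?_⟩
  · have := congrArg Subtype.val hid
    push_cast at this
    rw [hℓ] at this
    rw [this, htr, htr, htr]
    simp
  · rintro ⟨a, j⟩ (hj : j < ℓ')
    have hjn : j < n := by omega
    change wL ((σ ^ (a : ℕ)) (x.out.coeff j : L)) ≤ M
    rw [hGal]
    convert hxM ⟨j, hjn⟩ hj using 3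
    exact TruncatedWittVector.coeff_out x ⟨j, hjn⟩

theorem sum_Ico_one_neg_one_pow_mul_choose {p : ℕ} (hp : p ≠ 0) :
    ∑ j ∈ Ico 1 p, (-1 : ℤ) ^ j * p.choose j = -1 - (-1) ^ p := by
  have h := Int.alternating_sum_range_choose_of_ne hp
  rw [range_eq_Ico, sum_eq_sum_Ico_succ_bot (by omega), sum_Ico_succ_top (by omega)] at h
  simp only [pow_zero, Nat.choose_zero_right, Nat.cast_one, mul_one, Nat.choose_self] at h
  linear_combination h

/-- Indices are `0`-based (`ℓ = ℓ' + 1`), and "`h` is a polynomial in the conjugates of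
`x_1, …, x_{ℓ-2}` all of whose monomials have degree `≥ p²`" is recorded through its consequence
`v_L(h) ≥ p² · min_{j ≤ ℓ-2} v_L(x_j)`. -/
theorem stmt10_general (p : ℕ) [Fact p.Prime] (K L : Type) [Field K] [Field L]
    [Algebra K L] [CharZero K] [IsGalois K L] [FiniteDimensional K L]
    [IsCyclic (L ≃ₐ[K] L)]
    (hdeg : Module.finrank K L = p)
    (wK : Valuation K Zm0) (wL : Valuation L Zm0)
    -- the extension is totally ramified of degree `p` : `v_L = p·v_K` on `K`
    (hext : ∀ x : K, wL (algebraMap K L x) = wK x ^ p)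
    -- the Galois action preserves the valuation (so it acts on `O_L`)
    (hGal : ∀ (σ : L ≃ₐ[K] L) (a : L), wL (σ a) = wL a) :
    ∀ (n : ℕ) (x : TruncatedWittVector p n wL.valuationSubring),
      (∑ σ : L ≃ₐ[K] L, twmap p (galHom wL hGal σ) n x) = 0 →
      ∀ ℓ ℓ' : Fin n, (ℓ' : ℕ) + 1 = (ℓ : ℕ) →
      ∀ C : ℤ, (p : ℤ) * C = (∑ j ∈ Finset.Ico 1 p, (-1 : ℤ) ^ j * (p.choose j : ℤ)) →
      ∃ h : K, wK h ≤ 1 ∧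
        (p : K) * (-(Algebra.trace K L ((x.coeff ℓ : ↥wL.valuationSubring) : L))) =
          (Algebra.trace K L (((x.coeff ℓ' : ↥wL.valuationSubring) : L) ^ p) -
            Algebra.trace K L ((x.coeff ℓ' : ↥wL.valuationSubring) : L) ^ p) -
          (p : K) * (C : K) *
            Algebra.trace K L ((x.coeff ℓ' : ↥wL.valuationSubring) : L) ^ p +
          (p : K) * h ∧
        wL (algebraMap K L h) ≤
          ((Finset.univ.filter fun j : Fin n => (j : ℕ) + 2 ≤ (ℓ : ℕ)).sup
            fun j => wL ((x.coeff j : ↥wL.valuationSubring) : L)) ^ (p ^ 2) := by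
  intro n x hx ℓ ℓ' hℓ C hC
  have hp : p ≠ 0 := (Fact.out : p.Prime).ne_zero
  have hpK : (p : K) ≠ 0 := Nat.cast_ne_zero.mpr hp
  obtain ⟨η, hη, hηM⟩ := exists_conj_trace_identity hdeg wL hGal hx hℓ
  set tℓ := Algebra.trace K L ((x.coeff ℓ : wL.valuationSubring) : L)
  set t := Algebra.trace K L ((x.coeff ℓ' : wL.valuationSubring) : L)
  set t' := Algebra.trace K L (((x.coeff ℓ' : wL.valuationSubring) : L) ^ p)
  set h : K := -(p * tℓ + t' + (-1) ^ p * t ^ p) / p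
  have hph : (p : K) * h = -(p * tℓ + t' + (-1) ^ p * t ^ p) := mul_div_cancel₀ _ hpK
  have hηh : (η : L) = algebraMap K L h := by
    refine mul_left_cancel₀ (a := (p : L)) ?_ ?_
    · rw [← map_natCast (algebraMap K L)]
      exact (map_ne_zero _).mpr hpK
    · rw [hη, ← hph, map_mul, map_natCast]
  have hCK : (p : K) * C = -1 - (-1) ^ p := by
    exact_mod_cast
      congrArg (Int.cast : ℤ → K) (hC.trans (sum_Ico_one_neg_one_pow_mul_choose hp))
  refine ⟨h, ?_, by linear_combination -hph + t ^ p * hCK, ?_⟩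
  · rw [← pow_le_one_iff hp, ← hext, ← hηh]
    exact η.2
  · rw [← hηh]
    refine hηM _ (Finset.sup_le fun j _ => (x.coeff j).2) fun j hj => ?_
    exact Finset.le_sup (f := fun j : Fin n => wL ((x.coeff j : wL.valuationSubring) : L))
      (Finset.mem_filter.mpr ⟨Finset.mem_univ _, by omega⟩)

/-- Lemma `C` of Hogadi–Pisolkar. Let `L/K` be a totally ramified cyclic
extension of degree `p` and `(x_1, …, x_n) ∈ W_n(O_L)` a Witt vector of trace zero in
`W_n(O_L)`. Then for each `2 ≤ ℓ ≤ n` (below `ℓ = ℓ' + 1`),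
`−tr(x_ℓ) = (tr(x_{ℓ−1}^p) − tr(x_{ℓ−1})^p)/p − C·tr(x_{ℓ−1})^p + h`, where
`C = (1/p)·Σ_{j=1}^{p−1} (−1)^j C(p,j) ∈ ℤ` and `h ∈ O_K` is a polynomial expression in
`x_1, …, x_{ℓ−2}` and their conjugates with all monomials of degree `≥ p²` (expressed below
through the valuation bound `v_L(h) ≥ p² · min{v_L(x_j) : j ≤ ℓ−2}`). The identity is stated
multiplied through by `p`. -/
theorem stmt10 (p : ℕ) (hp : p.Prime) [Fact p.Prime] (K L : Type) [Field K] [Field L]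
    [Algebra K L] [CharZero K] [IsGalois K L] [FiniteDimensional K L]
    [IsCyclic (L ≃ₐ[K] L)]
    (hdeg : Module.finrank K L = p)
    (wK : Valuation K Zm0) (wL : Valuation L Zm0)
    -- the valuations are normalized (value group exactly `ℤ`)
    (hwK : Function.Surjective wK) (hwL : Function.Surjective wL)
    -- the fields are complete
    (hKcomplete : @CompleteSpace K (Valued.mk' wK).toUniformSpace)
    (hLcomplete : @CompleteSpace L (Valued.mk' wL).toUniformSpace)
    -- the extension is totally ramified of degree `p` : `v_L = p·v_K` on `K`
    (hext : ∀ x : K, wL (algebraMap K L x) = wK x ^ p)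
    -- the residue characteristic is `p`
    (hres : wK (p : K) < 1)
    -- the Galois action preserves the valuation (so it acts on `O_L`)
    (hGal : ∀ (σ : L ≃ₐ[K] L) (a : L), wL (σ a) = wL a)
    -- `s` is the ramification break of `L/K`
    (s : ℤ) (hspos : 0 < s)
    (hs : ∀ σ : L ≃ₐ[K] L, σ ≠ AlgEquiv.refl →
      (∀ a : L, wL a ≤ 1 → wL (σ a - a) ≤ oa (-(s + 1))) ∧
      (∃ a : L, wL a ≤ 1 ∧ wL (σ a - a) = oa (-(s + 1)))) :
    ∀ (n : ℕ) (x : TruncatedWittVector p n wL.valuationSubring),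
      (∑ σ : L ≃ₐ[K] L, twmap p (galHom wL hGal σ) n x) = 0 →
      ∀ ℓ ℓ' : Fin n, (ℓ' : ℕ) + 1 = (ℓ : ℕ) →
      ∀ C : ℤ, (p : ℤ) * C = (∑ j ∈ Finset.Ico 1 p, (-1 : ℤ) ^ j * (p.choose j : ℤ)) →
      ∃ h : K, wK h ≤ 1 ∧
        (p : K) * (-(Algebra.trace K L ((x.coeff ℓ : ↥wL.valuationSubring) : L))) =
          (Algebra.trace K L (((x.coeff ℓ' : ↥wL.valuationSubring) : L) ^ p) -
            Algebra.trace K L ((x.coeff ℓ' : ↥wL.valuationSubring) : L) ^ p) -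
          (p : K) * (C : K) *
            Algebra.trace K L ((x.coeff ℓ' : ↥wL.valuationSubring) : L) ^ p +
          (p : K) * h ∧
        wL (algebraMap K L h) ≤
          ((Finset.univ.filter fun j : Fin n => (j : ℕ) + 2 ≤ (ℓ : ℕ)).sup
            fun j => wL ((x.coeff j : ↥wL.valuationSubring) : L)) ^ (p ^ 2) :=
  stmt10_general p K L hdeg wK wL hext hGal
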